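/- arXiv:2406.17952 — 2 statements merged into one kernel-verified Lean document; each statement's English description precedes it below -/
import Mathlib

section
/- For symmetric positive definite Σ_K, Σ_Q and vectors μ_P, μ_Q ∈ ℝ^d: ‖μ_P−μ_Q‖_{Σ_K^{-1}} − ‖μ_P−μ_Q‖_{Σ_Q^{-1}} ≤ ‖Σ_K^{-1/2}Σ_Q^{1/2} − I‖₂ · ‖μ_P−μ_Q‖_{Σ_Q^{-1}}, where ‖·‖₂ is the spectral norm. -/
/-!
Put `y = Σ_Q^{-1/2} x` with `x = μ_P - μ_Q`. Then `‖x‖_{Σ_Q⁻¹} = |y|` and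
`‖x‖_{Σ_K⁻¹} = |M y|` for `M = Σ_K^{-1/2} Σ_Q^{1/2}`, so the claim is the reverse triangle
inequality `|M y| - |y| ≤ |(M - I) y| ≤ ‖M - I‖₂ |y|`.
-/

open Matrix MeasureTheory

/-- Elliptic norm `‖x‖_A = √(xᵀ A x)`. -/
noncomputable def enorm' {d : ℕ} (A : Matrix (Fin d) (Fin d) ℝ) (x : Fin d → ℝ) : ℝ :=
  Real.sqrt (x ⬝ᵥ A.mulVec x)

section
open scoped ComplexOrder

/-- The square root of a positive semidefinite matrix (as in Mathlib of December 2024). -/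
noncomputable def Matrix.PosSemidef.sqrt {n 𝕜 : Type*} [Fintype n] [RCLike 𝕜] [DecidableEq n]
    {A : Matrix n n 𝕜} (hA : A.PosSemidef) : Matrix n n 𝕜 :=
  hA.1.eigenvectorUnitary.1 * diagonal ((↑) ∘ (√·) ∘ hA.1.eigenvalues) *
  (star hA.1.eigenvectorUnitary : Matrix n n 𝕜)

end

/-- Spectral (operator) norm of a matrix. -/
noncomputable def specNorm {d : ℕ} (A : Matrix (Fin d) (Fin d) ℝ) : ℝ :=
  ‖Matrix.toEuclideanCLM (𝕜 := ℝ) A‖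

theorem ContinuousLinearMap.norm_apply_sub_norm_le_opNorm_sub_one {𝕜 E : Type*}
    [NontriviallyNormedField 𝕜] [SeminormedAddCommGroup E] [NormedSpace 𝕜 E]
    (f : E →L[𝕜] E) (y : E) : ‖f y‖ - ‖y‖ ≤ ‖f - 1‖ * ‖y‖ :=
  calc ‖f y‖ - ‖y‖ ≤ ‖f y - y‖ := norm_sub_norm_le _ _
    _ = ‖(f - 1) y‖ := rfl
    _ ≤ ‖f - 1‖ * ‖y‖ := (f - 1).le_opNorm y

namespace Matrix.PosSemidef

open scoped ComplexOrder

variable {n 𝕜 : Type*} [Fintype n] [RCLike 𝕜] [DecidableEq n] {A : Matrix n n 𝕜}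

theorem sqrt_mul_self (hA : A.PosSemidef) : hA.sqrt * hA.sqrt = A := by
  conv_rhs => rw [hA.1.spectral_theorem, Unitary.conjStarAlgAut_apply]
  set U : Matrix n n 𝕜 := hA.1.eigenvectorUnitary.1
  set D := diagonal ((↑) ∘ (√·) ∘ hA.1.eigenvalues : n → 𝕜)
  have hU : star U * U = 1 := Unitary.coe_star_mul_self hA.1.eigenvectorUnitary
  have hD : D * D = diagonal ((↑) ∘ hA.1.eigenvalues) := by
    rw [diagonal_mul_diagonal]
    congr 1
    funext i
    simp only [Function.comp_apply, ← RCLike.ofReal_mul, Real.mul_self_sqrt (hA.eigenvalues_nonneg i)]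
  calc U * D * star U * (U * D * star U) = U * D * (star U * U) * D * star U := by
        simp only [Matrix.mul_assoc]
    _ = U * (D * D) * star U := by rw [hU, Matrix.mul_one]; simp only [Matrix.mul_assoc]
    _ = _ := by rw [hD]

theorem sqrt_isHermitian (hA : A.PosSemidef) : hA.sqrt.IsHermitian := by
  have hD : star (RCLike.ofReal ∘ (√·) ∘ hA.1.eigenvalues : n → 𝕜) =
      RCLike.ofReal ∘ (√·) ∘ hA.1.eigenvalues := by
    funext i; simp
  rw [IsHermitian, PosSemidef.sqrt, conjTranspose_mul, conjTranspose_mul, diagonal_conjTranspose,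
    Matrix.star_eq_conjTranspose, conjTranspose_conjTranspose, Matrix.mul_assoc]
  erw [hD]

end Matrix.PosSemidef

namespace Matrix.PosDef

open scoped ComplexOrder

theorem isUnit_sqrt {n 𝕜 : Type*} [Fintype n] [RCLike 𝕜] [DecidableEq n] {A : Matrix n n 𝕜}
    (hA : A.PosDef) : IsUnit hA.posSemidef.sqrt :=
  isUnit_of_mul_isUnit_left (hA.posSemidef.sqrt_mul_self ▸ hA.isUnit)

theorem inv_eq_transpose_mul_self {n : Type*} [Fintype n] [DecidableEq n]
    {A : Matrix n n ℝ} (hA : A.PosDef) :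
    A⁻¹ = (hA.posSemidef.sqrt⁻¹)ᵀ * hA.posSemidef.sqrt⁻¹ := by
  rw [transpose_nonsing_inv, ← conjTranspose_eq_transpose_of_trivial,
    hA.posSemidef.sqrt_isHermitian.eq, ← mul_inv_rev, hA.posSemidef.sqrt_mul_self]

end Matrix.PosDef

theorem enorm'_transpose_mul_self {d : ℕ} (B : Matrix (Fin d) (Fin d) ℝ) (x : Fin d → ℝ) :
    enorm' (Bᵀ * B) x = ‖WithLp.toLp 2 (B *ᵥ x)‖ := by
  rw [enorm', norm_eq_sqrt_real_inner, EuclideanSpace.inner_toLp_toLp, ← mulVec_mulVec,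
    dotProduct_mulVec, vecMul_transpose, star_trivial]

theorem stmt10 {d : ℕ} (μP μQ : Fin d → ℝ) (SK SQ : Matrix (Fin d) (Fin d) ℝ)
    (hK : SK.PosDef) (hQ : SQ.PosDef) :
    enorm' SK⁻¹ (μP - μQ) - enorm' SQ⁻¹ (μP - μQ) ≤
      specNorm ((hK.posSemidef.sqrt)⁻¹ * hQ.posSemidef.sqrt - 1) * enorm' SQ⁻¹ (μP - μQ) := by
  set S := hQ.posSemidef.sqrt
  set T := hK.posSemidef.sqrt
  set y := WithLp.toLp 2 (S⁻¹ *ᵥ (μP - μQ))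
  have hQy : enorm' SQ⁻¹ (μP - μQ) = ‖y‖ := by
    rw [hQ.inv_eq_transpose_mul_self, enorm'_transpose_mul_self]
  have hKy : enorm' SK⁻¹ (μP - μQ) = ‖toEuclideanCLM (𝕜 := ℝ) (T⁻¹ * S) y‖ := by
    rw [hK.inv_eq_transpose_mul_self, enorm'_transpose_mul_self, toEuclideanCLM_toLp,
      ← mulVec_mulVec, mulVec_mulVec _ S,
      mul_nonsing_inv _ ((isUnit_iff_isUnit_det _).1 hQ.isUnit_sqrt),
      one_mulVec]
  rw [hQy, hKy, specNorm, map_sub, map_one]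
  exact ContinuousLinearMap.norm_apply_sub_norm_le_opNorm_sub_one _ y
end

section
/- Let D₁(P,Q) = ‖Σ_Q^{-1/2}Σ_PΣ_Q^{-1/2} − I‖_F + ‖Σ_P^{-1/2}Σ_QΣ_P^{-1/2} − I‖_F for symmetric positive definite Σ_P, Σ_Q. If all Frobenius-norm terms entering D(P,Q) and D(Q,K) are at most ε and Σ_P, Σ_Q, Σ_K pairwise commute, then D₁(P,K) ≤ D₁(P,Q) + D₁(Q,K) + 2ε². -/
open Matrix MeasureTheory

/-- Frobenius norm `‖A‖_F = √(tr (Aᵀ A))`. -/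
noncomputable def frob {d : ℕ} (A : Matrix (Fin d) (Fin d) ℝ) : ℝ :=
  Real.sqrt (Matrix.trace (Aᵀ * A))

/-- `D₁(P,Q)`, the covariance part of the LINSCAN distance. -/
noncomputable def D1 {d : ℕ} {SP SQ : Matrix (Fin d) (Fin d) ℝ}
    (hP : SP.PosDef) (hQ : SQ.PosDef) : ℝ :=
  frob ((hQ.posSemidef.sqrt)⁻¹ * SP * (hQ.posSemidef.sqrt)⁻¹ - 1)
    + frob ((hP.posSemidef.sqrt)⁻¹ * SQ * (hP.posSemidef.sqrt)⁻¹ - 1)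

/-!
Since the three covariances commute, so do their square roots and the inverses of these, hence
`A = Σ_Q^{-1/2} Σ_P Σ_Q^{-1/2}` and `B = Σ_K^{-1/2} Σ_Q Σ_K^{-1/2}` multiply to
`AB = Σ_K^{-1/2} Σ_P Σ_K^{-1/2}`. Writing `AB - I = (A - I) + (B - I) + (A - I)(B - I)`, the
triangle inequality and submultiplicativity of the Frobenius norm bound the first term of
`D₁(P,K)` by the corresponding terms of `D₁(P,Q)` and `D₁(Q,K)` plus `ε²`; the second term is
the same argument with `P` and `K` exchanged.
-/

theorem Commute.ringInverse_right {M₀ : Type*} [MonoidWithZero M₀] {a b : M₀}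
    (h : Commute a b) : Commute a (Ring.inverse b) := by
  by_cases hb : IsUnit b
  · obtain ⟨u, rfl⟩ := hb
    rw [Ring.inverse_unit]
    exact h.units_inv_right
  · rw [Ring.inverse_non_unit b hb]
    exact Commute.zero_right a

theorem conj_mul_conj_eq_conj {M : Type*} [Monoid M] {a b p q : M}
    (hap : Commute a p) (hbq : Commute b q) (hbp : Commute b p) (haq : a * a * q = 1) :
    (a * p * a) * (b * q * b) = b * p * b :=
  calc (a * p * a) * (b * q * b) = p * (a * a * q) * (b * b) := by
        rw [hap.eq, hbq.eq]
        simp only [mul_assoc]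
  _ = b * p * b := by rw [haq, mul_one, ← mul_assoc, hbp.eq]

theorem norm_mul_sub_one_le {R : Type*} [SeminormedRing R] (x y : R) :
    ‖x * y - 1‖ ≤ ‖x - 1‖ + ‖y - 1‖ + ‖x - 1‖ * ‖y - 1‖ :=
  calc ‖x * y - 1‖ = ‖(x - 1) + (y - 1) + (x - 1) * (y - 1)‖ := by congr 1; noncomm_ring
  _ ≤ ‖(x - 1) + (y - 1)‖ + ‖(x - 1) * (y - 1)‖ := norm_add_le _ _
  _ ≤ ‖x - 1‖ + ‖y - 1‖ + ‖x - 1‖ * ‖y - 1‖ := add_le_add (norm_add_le _ _) (norm_mul_le _ _)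

namespace Matrix

open scoped ComplexOrder

variable {n 𝕜 : Type*} [Fintype n] [DecidableEq n] [RCLike 𝕜]

theorem _root_.Commute.nonsing_inv_right {α : Type*} [CommRing α] {A B : Matrix n n α}
    (h : Commute A B) : Commute A B⁻¹ := by
  rw [nonsing_inv_eq_ringInverse]
  exact h.ringInverse_right

theorem PosSemidef.sqrt_eq_cfc {A : Matrix n n 𝕜} (hA : A.PosSemidef) :
    hA.sqrt = cfc Real.sqrt A := by
  rw [hA.1.cfc_eq]
  rfl

theorem PosSemidef.sqrt_mul_self_s19 {A : Matrix n n 𝕜} (hA : A.PosSemidef) :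
    hA.sqrt * hA.sqrt = A := by
  rw [hA.sqrt_eq_cfc, ← cfc_mul Real.sqrt Real.sqrt A]
  nth_rewrite 2 [← cfc_id' ℝ A hA.1]
  refine cfc_congr fun x hx => Real.mul_self_sqrt ?_
  rw [hA.1.spectrum_real_eq_range_eigenvalues] at hx
  obtain ⟨i, rfl⟩ := hx
  exact hA.eigenvalues_nonneg i

theorem _root_.Commute.inv_sqrt_right {A B : Matrix n n ℝ} (h : Commute A B) (hB : B.PosSemidef) :
    Commute A hB.sqrt⁻¹ := by
  rw [hB.sqrt_eq_cfc]
  exact (h.symm.cfc_real Real.sqrt).symm.nonsing_inv_right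

theorem PosDef.inv_sqrt_mul_inv_sqrt_mul_self {A : Matrix n n 𝕜} (hA : A.PosDef) :
    hA.posSemidef.sqrt⁻¹ * hA.posSemidef.sqrt⁻¹ * A = 1 := by
  rw [← mul_inv_rev, hA.posSemidef.sqrt_mul_self_s19,
    nonsing_inv_mul A (A.isUnit_iff_isUnit_det.mp hA.isUnit)]

end Matrix

open scoped Matrix.Norms.Frobenius in
theorem frob_eq_norm {d : ℕ} (A : Matrix (Fin d) (Fin d) ℝ) : frob A = ‖A‖ := by
  rw [frob, frobenius_norm_def, Real.sqrt_eq_rpow]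
  congr 1
  calc trace (Aᵀ * A) = ∑ i, ∑ j, A j i * A j i := by simp [trace, mul_apply]
  _ = ∑ i, ∑ j, ‖A i j‖ ^ (2 : ℝ) := by
        rw [Finset.sum_comm]
        simp [sq]

open scoped Matrix.Norms.Frobenius in
theorem frob_inv_sqrt_conj_sub_one_le {d : ℕ} {SP SQ SK : Matrix (Fin d) (Fin d) ℝ}
    (hQ : SQ.PosDef) (hK : SK.PosDef)
    (hPQ : Commute SP SQ) (hPK : Commute SP SK) (hQK : Commute SQ SK) :
    frob (hK.posSemidef.sqrt⁻¹ * SP * hK.posSemidef.sqrt⁻¹ - 1) ≤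
      frob (hQ.posSemidef.sqrt⁻¹ * SP * hQ.posSemidef.sqrt⁻¹ - 1)
        + frob (hK.posSemidef.sqrt⁻¹ * SQ * hK.posSemidef.sqrt⁻¹ - 1)
        + frob (hQ.posSemidef.sqrt⁻¹ * SP * hQ.posSemidef.sqrt⁻¹ - 1)
          * frob (hK.posSemidef.sqrt⁻¹ * SQ * hK.posSemidef.sqrt⁻¹ - 1) := by
  have hprod := conj_mul_conj_eq_conj (hPQ.inv_sqrt_right hQ.posSemidef).symm
    (hQK.inv_sqrt_right hK.posSemidef).symm (hPK.inv_sqrt_right hK.posSemidef).symm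
    hQ.inv_sqrt_mul_inv_sqrt_mul_self
  simp only [frob_eq_norm, ← hprod]
  exact norm_mul_sub_one_le _ _

theorem stmt19_general {d : ℕ} {SP SQ SK : Matrix (Fin d) (Fin d) ℝ}
    (hP : SP.PosDef) (hQ : SQ.PosDef) (hK : SK.PosDef) (ε : ℝ)
    (hPQ : SP * SQ = SQ * SP) (hPK : SP * SK = SK * SP) (hQK : SQ * SK = SK * SQ)
    (h1 : frob ((hQ.posSemidef.sqrt)⁻¹ * SP * (hQ.posSemidef.sqrt)⁻¹ - 1) ≤ ε)
    (h2 : frob ((hP.posSemidef.sqrt)⁻¹ * SQ * (hP.posSemidef.sqrt)⁻¹ - 1) ≤ ε)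
    (h3 : frob ((hK.posSemidef.sqrt)⁻¹ * SQ * (hK.posSemidef.sqrt)⁻¹ - 1) ≤ ε)
    (h4 : frob ((hQ.posSemidef.sqrt)⁻¹ * SK * (hQ.posSemidef.sqrt)⁻¹ - 1) ≤ ε) :
    D1 hP hK ≤ D1 hP hQ + D1 hQ hK + 2 * ε ^ 2 := by
  have hPK_via_Q := frob_inv_sqrt_conj_sub_one_le hQ hK hPQ hPK hQK
  have hKP_via_Q := frob_inv_sqrt_conj_sub_one_le hQ hP
    (hQK : Commute SQ SK).symm (hPK : Commute SP SK).symm (hPQ : Commute SP SQ).symm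
  have hε : 0 ≤ ε := (Real.sqrt_nonneg _).trans h1
  have h13 := mul_le_mul h1 h3 (Real.sqrt_nonneg _) hε
  have h42 := mul_le_mul h4 h2 (Real.sqrt_nonneg _) hε
  unfold D1
  linarith

theorem stmt19 {d : ℕ} {SP SQ SK : Matrix (Fin d) (Fin d) ℝ}
    (hP : SP.PosDef) (hQ : SQ.PosDef) (hK : SK.PosDef) (ε : ℝ) (hε : 0 < ε)
    (hPQ : SP * SQ = SQ * SP) (hPK : SP * SK = SK * SP) (hQK : SQ * SK = SK * SQ)
    (h1 : frob ((hQ.posSemidef.sqrt)⁻¹ * SP * (hQ.posSemidef.sqrt)⁻¹ - 1) ≤ ε)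
    (h2 : frob ((hP.posSemidef.sqrt)⁻¹ * SQ * (hP.posSemidef.sqrt)⁻¹ - 1) ≤ ε)
    (h3 : frob ((hK.posSemidef.sqrt)⁻¹ * SQ * (hK.posSemidef.sqrt)⁻¹ - 1) ≤ ε)
    (h4 : frob ((hQ.posSemidef.sqrt)⁻¹ * SK * (hQ.posSemidef.sqrt)⁻¹ - 1) ≤ ε) :
    D1 hP hK ≤ D1 hP hQ + D1 hQ hK + 2 * ε ^ 2 :=
  stmt19_general hP hQ hK ε hPQ hPK hQK h1 h2 h3 h4
end
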